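/- arXiv:2605.10250 — 2 statements merged into one kernel-verified Lean document; each statement's English description precedes it below -/
import Mathlib

section
/- For all real q₁, q₂, q₃, q₄, each of the operators U₁(q₁), U₂(q₂), U₃(q₃), U₄(q₄) is a unitary operator on L²(ℝ², ℂ), and the following operator identities hold: U₁(q₁)∘U₃(q₃) = exp(i·q₃·q₁/ħ₀)·U₃(q₃)∘U₁(q₁); U₂(q₂)∘U₄(q₄) = exp(i·q₄·q₂/ħ₀)·U₄(q₄)∘U₂(q₂); U₁(q₁)∘U₂(q₂) = exp(−i·B₀·q₂·q₁/ħ₀)·U₂(q₂)∘U₁(q₁); U₃(q₃)∘U₄(q₄) = exp(−i·θ₀·q₄·q₃/ħ₀²)·U₄(q₄)∘U₃(q₃); U₁(q₁)∘U₄(q₄) = U₄(q₄)∘U₁(q₁); and U₂(q₂)∘U₃(q₃) = U₃(q₃)∘U₂(q₂). -/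
open MeasureTheory Complex
open scoped ENNReal

noncomputable section

/-- The pointwise action of `U₁(t)` on functions on `ℝ²`. -/
def U1act (hb th B r s t : ℝ) (f : ℝ × ℝ → ℂ) : ℝ × ℝ → ℂ := fun p =>
  Complex.exp (-Complex.I * B * (1 - r) * t * p.2 / (r * th * B - hb)) *
    f (p.1 + ((th * B * (r + s - r * s) - hb) / (r * th * B - hb)) * t, p.2)

/-- The pointwise action of `U₂(t)` on functions on `ℝ²`. -/
def U2act (hb th B r s t : ℝ) (f : ℝ × ℝ → ℂ) : ℝ × ℝ → ℂ := fun p =>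
  Complex.exp (-Complex.I * r * B * t * p.1 / hb) *
    f (p.1, p.2 - ((r * th * B * (1 - s) - hb) / hb) * t)

/-- The pointwise action of `U₃(t)` on functions on `ℝ²`. -/
def U3act (hb th B r s t : ℝ) (f : ℝ × ℝ → ℂ) : ℝ × ℝ → ℂ := fun p =>
  Complex.exp (Complex.I * t * p.1 / hb) * f (p.1, p.2 - s * (th / hb) * t)

/-- The pointwise action of `U₄(t)` on functions on `ℝ²`. -/
def U4act (hb th B r s t : ℝ) (f : ℝ × ℝ → ℂ) : ℝ × ℝ → ℂ := fun p =>
  Complex.exp (Complex.I * t * p.2 / hb) * f (p.1 + (1 - s) * (th / hb) * t, p.2)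

/-- A pointwise-defined map on functions "is a unitary operator on `L²(ℝ², ℂ)`":
there is a unitary (linear isometric bijection) of `L²` whose action agrees a.e. with it. -/
def IsUnitaryOnL2 (Uact : (ℝ × ℝ → ℂ) → (ℝ × ℝ → ℂ)) : Prop :=
  ∃ V : Lp ℂ 2 (volume : Measure (ℝ × ℝ)) ≃ₗᵢ[ℂ] Lp ℂ 2 (volume : Measure (ℝ × ℝ)),
    ∀ f : Lp ℂ 2 (volume : Measure (ℝ × ℝ)), (V f : ℝ × ℝ → ℂ) =ᵐ[volume] Uact ⇑f

/-!
Each `Uₖ(t)` is a Weyl-type operator `f ↦ e^{i φ(x)} f(x + v)` with `φ` a real linear form on `ℝ²`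
and `v ∈ ℝ²`. Such an operator is translation by `v` (which preserves Lebesgue measure) followed
by multiplication by a unimodular function, hence unitary on `L²`. Two of them satisfy
`W(φ, v) W(ψ, w) = e^{i (ψ v - φ w)} W(ψ, w) W(φ, v)`, so every commutation relation reduces to
evaluating the scalar `ψ v - φ w` for the forms and translation vectors of the `Uₖ`.
-/

namespace MeasureTheory

variable {α β 𝕜 E : Type*} [MeasurableSpace α] [MeasurableSpace β] {p : ℝ≥0∞}
  {μ : Measure α} {ν : Measure β} [NormedField 𝕜] [NormedAddCommGroup E] [NormedSpace 𝕜 E]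
  {c : α → 𝕜}

lemma eLpNorm_smul_of_norm_eq_one (hc1 : ∀ x, ‖c x‖ = 1) (f : α → E) :
    eLpNorm (c • f) p μ = eLpNorm f p μ :=
  eLpNorm_congr_norm_ae (.of_forall fun x ↦ by simp [norm_smul, hc1])

lemma MemLp.smul_of_norm_eq_one (hc : AEStronglyMeasurable c μ) (hc1 : ∀ x, ‖c x‖ = 1)
    {f : α → E} (hf : MemLp f p μ) : MemLp (c • f) p μ :=
  ⟨hc.smul hf.1, by rw [eLpNorm_smul_of_norm_eq_one hc1]; exact hf.2⟩

namespace Lp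

variable [Fact (1 ≤ p)]

variable (𝕜 E p) in
def compMeasurableEquivₗᵢ (T : α ≃ᵐ β) (hT : MeasurePreserving T μ ν) :
    Lp E p ν ≃ₗᵢ[𝕜] Lp E p μ where
  __ := compMeasurePreservingₗᵢ 𝕜 T hT
  invFun := compMeasurePreserving T.symm (hT.symm T)
  left_inv f := by
    apply Lp.ext
    filter_upwards [coeFn_compMeasurePreserving (compMeasurePreserving T hT f) (hT.symm T),
      (hT.symm T).quasiMeasurePreserving.ae_eq_comp (coeFn_compMeasurePreserving f hT)]
      with x h₁ h₂
    simp_all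
  right_inv g := by
    apply Lp.ext
    filter_upwards [coeFn_compMeasurePreserving (compMeasurePreserving T.symm (hT.symm T) g) hT,
      hT.quasiMeasurePreserving.ae_eq_comp (coeFn_compMeasurePreserving g (hT.symm T))]
      with x h₁ h₂
    simp_all

lemma coeFn_compMeasurableEquivₗᵢ (T : α ≃ᵐ β) (hT : MeasurePreserving T μ ν) (f : Lp E p ν) :
    compMeasurableEquivₗᵢ 𝕜 E p T hT f =ᵐ[μ] f ∘ T :=
  coeFn_compMeasurePreserving f hT

variable (E p μ) in
def smulOfNormEqOneₗᵢ (c : α → 𝕜) (hc : AEStronglyMeasurable c μ) (hc1 : ∀ x, ‖c x‖ = 1) :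
    Lp E p μ →ₗᵢ[𝕜] Lp E p μ where
  toFun f := ((Lp.memLp f).smul_of_norm_eq_one hc hc1).toLp _
  map_add' f g := by
    rw [← MemLp.toLp_add]
    apply MemLp.toLp_congr
    filter_upwards [Lp.coeFn_add f g] with x hx
    simp only [Pi.smul_apply', hx, Pi.add_apply, smul_add]
  map_smul' a f := by
    rw [← MemLp.toLp_const_smul]
    apply MemLp.toLp_congr
    filter_upwards [Lp.coeFn_smul a f] with x hx
    simp [hx, smul_comm (c x) a]
  norm_map' f := (Lp.norm_toLp _ ((Lp.memLp f).smul_of_norm_eq_one hc hc1)).trans <| by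
    rw [eLpNorm_smul_of_norm_eq_one hc1, Lp.norm_def]

lemma coeFn_smulOfNormEqOneₗᵢ (hc : AEStronglyMeasurable c μ) (hc1 : ∀ x, ‖c x‖ = 1)
    (f : Lp E p μ) : smulOfNormEqOneₗᵢ E p μ c hc hc1 f =ᵐ[μ] c • f :=
  MemLp.coeFn_toLp ((Lp.memLp f).smul_of_norm_eq_one hc hc1)

lemma smulOfNormEqOneₗᵢ_smulOfNormEqOneₗᵢ_of_mul_eq_one (hc : AEStronglyMeasurable c μ)
    (hc1 : ∀ x, ‖c x‖ = 1) {d : α → 𝕜} (hd : AEStronglyMeasurable d μ) (hd1 : ∀ x, ‖d x‖ = 1)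
    (hcd : ∀ x, c x * d x = 1) (f : Lp E p μ) :
    smulOfNormEqOneₗᵢ E p μ c hc hc1 (smulOfNormEqOneₗᵢ E p μ d hd hd1 f) = f := by
  apply Lp.ext
  filter_upwards [coeFn_smulOfNormEqOneₗᵢ hc hc1 (smulOfNormEqOneₗᵢ E p μ d hd hd1 f),
    coeFn_smulOfNormEqOneₗᵢ hd hd1 f] with x h₁ h₂
  simp [h₁, h₂, smul_smul, hcd]

variable (E p μ) in
def smulOfNormEqOneₗᵢₑ (c : α → 𝕜) (hc : AEStronglyMeasurable c μ) (hc1 : ∀ x, ‖c x‖ = 1) :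
    Lp E p μ ≃ₗᵢ[𝕜] Lp E p μ where
  __ := smulOfNormEqOneₗᵢ E p μ c hc hc1
  invFun := smulOfNormEqOneₗᵢ E p μ c⁻¹ hc.inv₀ (by simp [hc1])
  left_inv := smulOfNormEqOneₗᵢ_smulOfNormEqOneₗᵢ_of_mul_eq_one _ _ _ _
    (fun x ↦ inv_mul_cancel₀ (norm_ne_zero_iff.mp (by simp [hc1])))
  right_inv := smulOfNormEqOneₗᵢ_smulOfNormEqOneₗᵢ_of_mul_eq_one _ _ _ _
    (fun x ↦ mul_inv_cancel₀ (norm_ne_zero_iff.mp (by simp [hc1])))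

lemma coeFn_smulOfNormEqOneₗᵢₑ (hc : AEStronglyMeasurable c μ) (hc1 : ∀ x, ‖c x‖ = 1)
    (f : Lp E p μ) : smulOfNormEqOneₗᵢₑ E p μ c hc hc1 f =ᵐ[μ] c • f :=
  coeFn_smulOfNormEqOneₗᵢ hc hc1 f

end Lp

end MeasureTheory

section PhaseShift

variable {E : Type*} [AddCommGroup E] [Module ℝ E] {φ ψ : E →ₗ[ℝ] ℝ} {v w : E}

def phaseShift (φ : E →ₗ[ℝ] ℝ) (v : E) (f : E → ℂ) : E → ℂ :=
  fun x ↦ exp (φ x * I) * f (x + v)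

theorem phaseShift_phaseShift {θ : ℂ} (hθ : ((ψ v - φ w : ℝ) : ℂ) * I = θ) (f : E → ℂ) :
    phaseShift φ v (phaseShift ψ w f) = exp θ • phaseShift ψ w (phaseShift φ v f) := by
  funext x
  simp only [phaseShift, Pi.smul_apply, smul_eq_mul, map_add, ← mul_assoc, ← exp_add, ← hθ,
    add_right_comm x w v]
  congr 2
  push_cast
  ring

theorem phaseShift_comm (h : ψ v = φ w) (f : E → ℂ) :
    phaseShift φ v (phaseShift ψ w f) = phaseShift ψ w (phaseShift φ v f) := by
  rw [phaseShift_phaseShift (θ := 0) (by simp [h]), exp_zero, one_smul]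

end PhaseShift

theorem isUnitaryOnL2_phaseShift (φ : ℝ × ℝ →ₗ[ℝ] ℝ) (v : ℝ × ℝ) :
    IsUnitaryOnL2 (phaseShift φ v) := by
  have hT := measurePreserving_add_right (volume : Measure (ℝ × ℝ)) v
  have hc : AEStronglyMeasurable (fun x ↦ exp (φ x * I)) volume := by
    have := φ.continuous_of_finiteDimensional
    fun_prop
  have hc1 (x : ℝ × ℝ) : ‖exp (φ x * I)‖ = 1 := norm_exp_ofReal_mul_I _
  let C := Lp.compMeasurableEquivₗᵢ ℂ ℂ 2 (MeasurableEquiv.addRight v) hT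
  refine ⟨C.trans (Lp.smulOfNormEqOneₗᵢₑ ℂ 2 volume _ hc hc1), fun f ↦ ?_⟩
  filter_upwards [Lp.coeFn_smulOfNormEqOneₗᵢₑ (𝕜 := ℂ) hc hc1 (C f),
    Lp.coeFn_compMeasurableEquivₗᵢ (𝕜 := ℂ) (MeasurableEquiv.addRight v) hT f] with x h₁ h₂
  rw [LinearIsometryEquiv.trans_apply, h₁, Pi.smul_apply', h₂]
  rfl

lemma U1act_eq_phaseShift (hb th B r s t : ℝ) :
    U1act hb th B r s t =
      phaseShift ((-(B * (1 - r) * t / (r * th * B - hb))) • LinearMap.snd ℝ ℝ ℝ)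
      ((th * B * (r + s - r * s) - hb) / (r * th * B - hb) * t, 0) := by
  funext f ⟨x, y⟩
  simp only [U1act, phaseShift, LinearMap.smul_apply, LinearMap.snd_apply, smul_eq_mul,
    Prod.mk_add_mk, add_zero, sub_eq_add_neg]
  congr 2
  push_cast
  ring

lemma U2act_eq_phaseShift (hb th B r s t : ℝ) :
    U2act hb th B r s t = phaseShift ((-(r * B * t / hb)) • LinearMap.fst ℝ ℝ ℝ)
      (0, -((r * th * B * (1 - s) - hb) / hb * t)) := by
  funext f ⟨x, y⟩
  simp only [U2act, phaseShift, LinearMap.smul_apply, LinearMap.fst_apply, smul_eq_mul,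
    Prod.mk_add_mk, add_zero, sub_eq_add_neg]
  congr 2
  push_cast
  ring

lemma U3act_eq_phaseShift (hb th B r s t : ℝ) :
    U3act hb th B r s t =
      phaseShift ((t / hb) • LinearMap.fst ℝ ℝ ℝ) (0, -(s * (th / hb) * t)) := by
  funext f ⟨x, y⟩
  simp only [U3act, phaseShift, LinearMap.smul_apply, LinearMap.fst_apply, smul_eq_mul,
    Prod.mk_add_mk, add_zero, sub_eq_add_neg]
  congr 2
  push_cast
  ring

lemma U4act_eq_phaseShift (hb th B r s t : ℝ) :
    U4act hb th B r s t =
      phaseShift ((t / hb) • LinearMap.snd ℝ ℝ ℝ) ((1 - s) * (th / hb) * t, 0) := by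
  funext f ⟨x, y⟩
  simp only [U4act, phaseShift, LinearMap.smul_apply, LinearMap.snd_apply, smul_eq_mul,
    Prod.mk_add_mk, add_zero, sub_eq_add_neg]
  congr 2
  push_cast
  ring

theorem stmt0_general (hb th B r s : ℝ) (hhb : hb ≠ 0)
    (hrs : r * th * B ≠ hb) (q1 q2 q3 q4 : ℝ) :
    IsUnitaryOnL2 (U1act hb th B r s q1) ∧ IsUnitaryOnL2 (U2act hb th B r s q2) ∧
    IsUnitaryOnL2 (U3act hb th B r s q3) ∧ IsUnitaryOnL2 (U4act hb th B r s q4) ∧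
    (∀ f : ℝ × ℝ → ℂ,
      U1act hb th B r s q1 (U3act hb th B r s q3 f) =
        Complex.exp (Complex.I * q3 * q1 / hb) • U3act hb th B r s q3 (U1act hb th B r s q1 f)) ∧
    (∀ f : ℝ × ℝ → ℂ,
      U2act hb th B r s q2 (U4act hb th B r s q4 f) =
        Complex.exp (Complex.I * q4 * q2 / hb) • U4act hb th B r s q4 (U2act hb th B r s q2 f)) ∧
    (∀ f : ℝ × ℝ → ℂ,
      U1act hb th B r s q1 (U2act hb th B r s q2 f) =
        Complex.exp (-Complex.I * B * q2 * q1 / hb) • U2act hb th B r s q2 (U1act hb th B r s q1 f)) ∧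
    (∀ f : ℝ × ℝ → ℂ,
      U3act hb th B r s q3 (U4act hb th B r s q4 f) =
        Complex.exp (-Complex.I * th * q4 * q3 / hb ^ 2) • U4act hb th B r s q4 (U3act hb th B r s q3 f)) ∧
    (∀ f : ℝ × ℝ → ℂ,
      U1act hb th B r s q1 (U4act hb th B r s q4 f) = U4act hb th B r s q4 (U1act hb th B r s q1 f)) ∧
    (∀ f : ℝ × ℝ → ℂ,
      U2act hb th B r s q2 (U3act hb th B r s q3 f) = U3act hb th B r s q3 (U2act hb th B r s q2 f)) := by
  have hbC : (hb : ℂ) ≠ 0 := ofReal_ne_zero.mpr hhb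
  have hd : r * th * B - hb ≠ 0 := sub_ne_zero.mpr hrs
  rw [U1act_eq_phaseShift, U2act_eq_phaseShift, U3act_eq_phaseShift, U4act_eq_phaseShift]
  refine ⟨isUnitaryOnL2_phaseShift _ _, isUnitaryOnL2_phaseShift _ _, isUnitaryOnL2_phaseShift _ _,
    isUnitaryOnL2_phaseShift _ _, phaseShift_phaseShift ?_, phaseShift_phaseShift ?_,
    phaseShift_phaseShift ?_, phaseShift_phaseShift ?_, phaseShift_comm (by simp),
    phaseShift_comm (by simp)⟩
  all_goals
    -- with `r * th * B - hb` kept atomic, `field_simp` sees that it is nonzero in every goal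
    generalize hd_def : r * th * B - hb = d at hd ⊢
    have hdC : (d : ℂ) ≠ 0 := ofReal_ne_zero.mpr hd
    simp only [LinearMap.smul_apply, LinearMap.fst_apply, LinearMap.snd_apply, smul_eq_mul]
    push_cast
    field_simp
    subst hd_def
    push_cast
    ring

theorem stmt0 (hb th B r s : ℝ) (hhb : hb ≠ 0) (hth : th ≠ 0) (hB : B ≠ 0)
    (hnd : hb - th * B ≠ 0) (hrs : r * th * B ≠ hb) (q1 q2 q3 q4 : ℝ) :
    IsUnitaryOnL2 (U1act hb th B r s q1) ∧ IsUnitaryOnL2 (U2act hb th B r s q2) ∧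
    IsUnitaryOnL2 (U3act hb th B r s q3) ∧ IsUnitaryOnL2 (U4act hb th B r s q4) ∧
    (∀ f : ℝ × ℝ → ℂ,
      U1act hb th B r s q1 (U3act hb th B r s q3 f) =
        Complex.exp (Complex.I * q3 * q1 / hb) • U3act hb th B r s q3 (U1act hb th B r s q1 f)) ∧
    (∀ f : ℝ × ℝ → ℂ,
      U2act hb th B r s q2 (U4act hb th B r s q4 f) =
        Complex.exp (Complex.I * q4 * q2 / hb) • U4act hb th B r s q4 (U2act hb th B r s q2 f)) ∧
    (∀ f : ℝ × ℝ → ℂ,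
      U1act hb th B r s q1 (U2act hb th B r s q2 f) =
        Complex.exp (-Complex.I * B * q2 * q1 / hb) • U2act hb th B r s q2 (U1act hb th B r s q1 f)) ∧
    (∀ f : ℝ × ℝ → ℂ,
      U3act hb th B r s q3 (U4act hb th B r s q4 f) =
        Complex.exp (-Complex.I * th * q4 * q3 / hb ^ 2) • U4act hb th B r s q4 (U3act hb th B r s q3 f)) ∧
    (∀ f : ℝ × ℝ → ℂ,
      U1act hb th B r s q1 (U4act hb th B r s q4 f) = U4act hb th B r s q4 (U1act hb th B r s q1 f)) ∧
    (∀ f : ℝ × ℝ → ℂ,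
      U2act hb th B r s q2 (U3act hb th B r s q3 f) = U3act hb th B r s q3 (U2act hb th B r s q2 f)) :=
  stmt0_general hb th B r s hhb hrs q1 q2 q3 q4
end
end

section
/- The operators X, Y, Π_x, Π_y map S(ℝ², ℂ) into itself and satisfy the commutation relations, as operator identities on S(ℝ², ℂ): [X, Π_x] = i·ħ₀·Id, [Y, Π_y] = i·ħ₀·Id, [X, Y] = i·θ₀·Id, and [Π_x, Π_y] = i·ħ₀·B₀·Id. -/
/-!
Each of `X`, `Y`, `Π_x`, `Π_y` has the form `a·x + b·y + c·∂_x + d·∂_y` with complex constants,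
so it preserves Schwartz space. The commutator of two such operators is multiplication by the
scalar `c·a' + d·b' - c'·a - d'·b`: the second-order terms cancel by the symmetry of second
derivatives, and only `[∂_x, x] = [∂_y, y] = 1` survive. The four relations are then identities
between rational functions of the parameters.
-/

open MeasureTheory Complex
open scoped ENNReal

noncomputable section

/-- `p_x = −i·ħ₀·∂_x`. -/
def pxOp (hb : ℝ) (f : ℝ × ℝ → ℂ) : ℝ × ℝ → ℂ := fun p =>
  -Complex.I * hb * fderiv ℝ f p (1, 0)

/-- `p_y = −i·ħ₀·∂_y`. -/
def pyOp (hb : ℝ) (f : ℝ × ℝ → ℂ) : ℝ × ℝ → ℂ := fun p =>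
  -Complex.I * hb * fderiv ℝ f p (0, 1)

/-- `X = x − s·(θ₀/ħ₀)·p_y`. -/
def Xop (hb th s : ℝ) (f : ℝ × ℝ → ℂ) : ℝ × ℝ → ℂ := fun p =>
  p.1 * f p - s * (th / hb) * pyOp hb f p

/-- `Y = y + (1−s)·(θ₀/ħ₀)·p_x`. -/
def Yop (hb th s : ℝ) (f : ℝ × ℝ → ℂ) : ℝ × ℝ → ℂ := fun p =>
  p.2 * f p + (1 - s) * (th / hb) * pxOp hb f p

/-- `Π_x = ((1−r)ħ₀B₀/(ħ₀−rθ₀B₀))·y + (((r+s−rs)θ₀B₀−ħ₀)/(rθ₀B₀−ħ₀))·p_x`. -/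
def PixOp (hb th B r s : ℝ) (f : ℝ × ℝ → ℂ) : ℝ × ℝ → ℂ := fun p =>
  ((1 - r) * hb * B / (hb - r * th * B)) * p.2 * f p +
    (((r + s - r * s) * th * B - hb) / (r * th * B - hb)) * pxOp hb f p

/-- `Π_y = −rB₀·x + (1 + r(s−1)θ₀B₀/ħ₀)·p_y`. -/
def PiyOp (hb th B r s : ℝ) (f : ℝ × ℝ → ℂ) : ℝ × ℝ → ℂ := fun p =>
  -(r * B) * p.1 * f p + (1 + r * (s - 1) * th * B / hb) * pyOp hb f p

def linearPhaseOp (a b c d : ℂ) (f : ℝ × ℝ → ℂ) (q : ℝ × ℝ) : ℂ :=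
  (a * q.1 + b * q.2) * f q + (c * fderiv ℝ f q (1, 0) + d * fderiv ℝ f q (0, 1))

theorem exists_schwartzMap_eq_linearPhaseOp (a b c d : ℂ) (f : SchwartzMap (ℝ × ℝ) ℂ) :
    ∃ g : SchwartzMap (ℝ × ℝ) ℂ, ⇑g = linearPhaseOp a b c d f := by
  let m : ℝ × ℝ →L[ℝ] ℂ := a • (ofRealCLM ∘L .fst ℝ ℝ ℝ) + b • (ofRealCLM ∘L .snd ℝ ℝ ℝ)
  refine ⟨SchwartzMap.smulLeftCLM ℂ m f +
    (c • LineDeriv.lineDerivOp ((1 : ℝ), (0 : ℝ)) f +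
      d • LineDeriv.lineDerivOp ((0 : ℝ), (1 : ℝ)) f), ?_⟩
  ext q
  rw [add_apply, SchwartzMap.smulLeftCLM_apply_apply m.hasTemperateGrowth]
  simp [linearPhaseOp, m, SchwartzMap.lineDerivOp_apply_eq_fderiv]

theorem fderiv_linearPhaseOp_apply (a b c d : ℂ) {f : ℝ × ℝ → ℂ} (hf : ContDiff ℝ 2 f)
    (p v : ℝ × ℝ) :
    fderiv ℝ (linearPhaseOp a b c d f) p v =
      (a * v.1 + b * v.2) * f p + (a * p.1 + b * p.2) * fderiv ℝ f p v +
        (c * fderiv ℝ (fderiv ℝ f) p v (1, 0) + d * fderiv ℝ (fderiv ℝ f) p v (0, 1)) := by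
  set m : ℝ × ℝ →L[ℝ] ℂ := a • (ofRealCLM ∘L .fst ℝ ℝ ℝ) + b • (ofRealCLM ∘L .snd ℝ ℝ ℝ)
  set D2 := fderiv ℝ (fderiv ℝ f) p
  have hf1 : HasFDerivAt f (fderiv ℝ f p) p :=
    (hf.differentiable two_ne_zero).differentiableAt.hasFDerivAt
  have hf2 : HasFDerivAt (fderiv ℝ f) D2 p :=
    ((hf.fderiv_right (m := 1) le_rfl).differentiable one_ne_zero).differentiableAt.hasFDerivAt
  have hD (w : ℝ × ℝ) : HasFDerivAt (fun q => fderiv ℝ f q w) (D2.flip w) p := by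
    simpa using hf2.clm_apply (hasFDerivAt_const w p)
  have h : HasFDerivAt (linearPhaseOp a b c d f)
      (m p • fderiv ℝ f p + f p • m + (c • D2.flip (1, 0) + d • D2.flip (0, 1))) p :=
    (m.hasFDerivAt.mul hf1).add (((hD _).const_mul c).add ((hD _).const_mul d))
  simp only [h.fderiv, m, add_apply, smul_apply,
    ContinuousLinearMap.comp_apply, ContinuousLinearMap.coe_fst', ContinuousLinearMap.coe_snd',
    ContinuousLinearMap.flip_apply, ofRealCLM_apply, smul_eq_mul]
  ring

theorem linearPhaseOp_commutator (a b c d a' b' c' d' : ℂ) {f : ℝ × ℝ → ℂ}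
    (hf : ContDiff ℝ 2 f) (p : ℝ × ℝ) :
    linearPhaseOp a b c d (linearPhaseOp a' b' c' d' f) p -
        linearPhaseOp a' b' c' d' (linearPhaseOp a b c d f) p =
      (c * a' + d * b' - c' * a - d' * b) * f p := by
  have hsymm := (hf.contDiffAt (x := p)).isSymmSndFDerivAt (by simp) (1, 0) (0, 1)
  simp only [linearPhaseOp, fderiv_linearPhaseOp_apply _ _ _ _ hf, hsymm, ofReal_one,
    ofReal_zero, mul_one, mul_zero, add_zero, zero_add]
  ring

section Operators

variable {hb th B r s : ℝ}

theorem Xop_eq_linearPhaseOp (hhb : hb ≠ 0) :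
    Xop hb th s = linearPhaseOp 1 0 0 (I * s * th) := by
  ext f q
  simp only [Xop, pyOp, linearPhaseOp]
  field_simp [ofReal_ne_zero.mpr hhb]
  ring

theorem Yop_eq_linearPhaseOp (hhb : hb ≠ 0) :
    Yop hb th s = linearPhaseOp 0 1 (-I * (1 - s) * th) 0 := by
  ext f q
  simp only [Yop, pxOp, linearPhaseOp]
  field_simp [ofReal_ne_zero.mpr hhb]
  ring

theorem PixOp_eq_linearPhaseOp :
    PixOp hb th B r s = linearPhaseOp 0 ((1 - r) * hb * B * ((hb : ℂ) - r * th * B)⁻¹)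
      (-I * hb * (hb - (r + s - r * s) * th * B) * ((hb : ℂ) - r * th * B)⁻¹) 0 := by
  have hγ : (((r + s - r * s) * th * B - hb) / (r * th * B - hb) : ℂ) =
      (hb - (r + s - r * s) * th * B) / (hb - r * th * B) := by
    rw [← neg_div_neg_eq, neg_sub, neg_sub]
  ext f q
  simp only [PixOp, pxOp, linearPhaseOp, hγ]
  ring

theorem PiyOp_eq_linearPhaseOp (hhb : hb ≠ 0) :
    PiyOp hb th B r s = linearPhaseOp (-(r * B)) 0 0 (-I * (hb + r * (s - 1) * th * B)) := by
  ext f q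
  simp only [PiyOp, pyOp, linearPhaseOp]
  field_simp [ofReal_ne_zero.mpr hhb]
  ring

end Operators

theorem stmt10_general (hb th B r s : ℝ) (hhb : hb ≠ 0) (hrs : r * th * B ≠ hb) :
    -- the operators map `S(ℝ², ℂ)` into itself
    (∀ f : SchwartzMap (ℝ × ℝ) ℂ, ∃ g : SchwartzMap (ℝ × ℝ) ℂ, ⇑g = Xop hb th s ⇑f) ∧
    (∀ f : SchwartzMap (ℝ × ℝ) ℂ, ∃ g : SchwartzMap (ℝ × ℝ) ℂ, ⇑g = Yop hb th s ⇑f) ∧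
    (∀ f : SchwartzMap (ℝ × ℝ) ℂ, ∃ g : SchwartzMap (ℝ × ℝ) ℂ, ⇑g = PixOp hb th B r s ⇑f) ∧
    (∀ f : SchwartzMap (ℝ × ℝ) ℂ, ∃ g : SchwartzMap (ℝ × ℝ) ℂ, ⇑g = PiyOp hb th B r s ⇑f) ∧
    -- `[X, Π_x] = i ħ₀ Id`
    (∀ (f : SchwartzMap (ℝ × ℝ) ℂ) (p : ℝ × ℝ),
      Xop hb th s (PixOp hb th B r s ⇑f) p - PixOp hb th B r s (Xop hb th s ⇑f) p =
        Complex.I * hb * f p) ∧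
    -- `[Y, Π_y] = i ħ₀ Id`
    (∀ (f : SchwartzMap (ℝ × ℝ) ℂ) (p : ℝ × ℝ),
      Yop hb th s (PiyOp hb th B r s ⇑f) p - PiyOp hb th B r s (Yop hb th s ⇑f) p =
        Complex.I * hb * f p) ∧
    -- `[X, Y] = i θ₀ Id`
    (∀ (f : SchwartzMap (ℝ × ℝ) ℂ) (p : ℝ × ℝ),
      Xop hb th s (Yop hb th s ⇑f) p - Yop hb th s (Xop hb th s ⇑f) p =
        Complex.I * th * f p) ∧
    -- `[Π_x, Π_y] = i ħ₀ B₀ Id`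
    (∀ (f : SchwartzMap (ℝ × ℝ) ℂ) (p : ℝ × ℝ),
      PixOp hb th B r s (PiyOp hb th B r s ⇑f) p - PiyOp hb th B r s (PixOp hb th B r s ⇑f) p =
        Complex.I * hb * B * f p) := by
  have hd : (hb : ℂ) - r * th * B ≠ 0 := sub_ne_zero.mpr (mod_cast hrs.symm)
  rw [Xop_eq_linearPhaseOp hhb, Yop_eq_linearPhaseOp hhb, PixOp_eq_linearPhaseOp,
    PiyOp_eq_linearPhaseOp hhb]
  refine ⟨exists_schwartzMap_eq_linearPhaseOp _ _ _ _, exists_schwartzMap_eq_linearPhaseOp _ _ _ _,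
    exists_schwartzMap_eq_linearPhaseOp _ _ _ _, exists_schwartzMap_eq_linearPhaseOp _ _ _ _,
    fun f p => ?_, fun f p => ?_, fun f p => ?_, fun f p => ?_⟩ <;>
  rw [linearPhaseOp_commutator _ _ _ _ _ _ _ _ (f.smooth 2)] <;>
  congr 1
  · linear_combination (I * hb) * mul_inv_cancel₀ hd
  · ring
  · ring
  · linear_combination (I * hb * B) * mul_inv_cancel₀ hd

theorem stmt10 (hb th B r s : ℝ) (hhb : hb ≠ 0) (hth : th ≠ 0) (hB : B ≠ 0)
    (hnd : hb - th * B ≠ 0) (hrs : r * th * B ≠ hb) :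
    -- the operators map `S(ℝ², ℂ)` into itself
    (∀ f : SchwartzMap (ℝ × ℝ) ℂ, ∃ g : SchwartzMap (ℝ × ℝ) ℂ, ⇑g = Xop hb th s ⇑f) ∧
    (∀ f : SchwartzMap (ℝ × ℝ) ℂ, ∃ g : SchwartzMap (ℝ × ℝ) ℂ, ⇑g = Yop hb th s ⇑f) ∧
    (∀ f : SchwartzMap (ℝ × ℝ) ℂ, ∃ g : SchwartzMap (ℝ × ℝ) ℂ, ⇑g = PixOp hb th B r s ⇑f) ∧
    (∀ f : SchwartzMap (ℝ × ℝ) ℂ, ∃ g : SchwartzMap (ℝ × ℝ) ℂ, ⇑g = PiyOp hb th B r s ⇑f) ∧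
    -- `[X, Π_x] = i ħ₀ Id`
    (∀ (f : SchwartzMap (ℝ × ℝ) ℂ) (p : ℝ × ℝ),
      Xop hb th s (PixOp hb th B r s ⇑f) p - PixOp hb th B r s (Xop hb th s ⇑f) p =
        Complex.I * hb * f p) ∧
    -- `[Y, Π_y] = i ħ₀ Id`
    (∀ (f : SchwartzMap (ℝ × ℝ) ℂ) (p : ℝ × ℝ),
      Yop hb th s (PiyOp hb th B r s ⇑f) p - PiyOp hb th B r s (Yop hb th s ⇑f) p =
        Complex.I * hb * f p) ∧
    -- `[X, Y] = i θ₀ Id`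
    (∀ (f : SchwartzMap (ℝ × ℝ) ℂ) (p : ℝ × ℝ),
      Xop hb th s (Yop hb th s ⇑f) p - Yop hb th s (Xop hb th s ⇑f) p =
        Complex.I * th * f p) ∧
    -- `[Π_x, Π_y] = i ħ₀ B₀ Id`
    (∀ (f : SchwartzMap (ℝ × ℝ) ℂ) (p : ℝ × ℝ),
      PixOp hb th B r s (PiyOp hb th B r s ⇑f) p - PiyOp hb th B r s (PixOp hb th B r s ⇑f) p =
        Complex.I * hb * B * f p) :=
  stmt10_general hb th B r s hhb hrs
end
end
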